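/- Let $w\in C([0,T];L^2(\mathcal{O};\mathbb{R}^2))$ be weakly divergence free, and set $\omega=\operatorname{curl} w = \partial_x w_2-\partial_z w_1 \in C([0,T];H^{-1}(\mathcal{O}))$. If $w$ satisfies the weak formulation $\langle w(t),\phi\rangle = -\int_0^t\langle w(s),A\phi\rangle ds + M_\phi(t)$ for all $\phi\in\mathsf{D}(A)$, where $M_{\nabla^\perp\psi}\equiv 0$ for every $\psi\in C_c^\infty(\mathcal{O})$ (the boundary-noise term vanishes on compactly supported test fields), then $\omega$ is a distributional solution of the heat equation $\partial_t\omega = \Delta\omega$ in $(0,T)\times\mathcal{O}$. -/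

import Mathlib

open MeasureTheory intervalIntegral
open scoped ENNReal

noncomputable section

/-- The domain `𝒪 = 𝕋 × (0,a)`, realized as the fundamental domain `(0,L) × (0,a)`. -/
def dom (L a : ℝ) : Set (ℝ × ℝ) := Set.Ioo 0 L ×ˢ Set.Ioo 0 a

/-- The `L²(𝒪)` pairing of two vector fields. -/
def ip (L a : ℝ) (f g : ℝ × ℝ → ℝ × ℝ) : ℝ :=
  ∫ x in dom L a, ((f x).1 * (g x).1 + (f x).2 * (g x).2)

/-- The perpendicular gradient `∇⊥ψ = (-∂_z ψ, ∂_x ψ)`. -/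
def pgrad (ψ : ℝ × ℝ → ℝ) (x : ℝ × ℝ) : ℝ × ℝ :=
  (-(fderiv ℝ ψ x (0, 1)), fderiv ℝ ψ x (1, 0))

/-- The Laplacian of a scalar function. -/
def lap (ψ : ℝ × ℝ → ℝ) (x : ℝ × ℝ) : ℝ :=
  fderiv ℝ (fun y => fderiv ℝ ψ y (1, 0)) x (1, 0) +
    fderiv ℝ (fun y => fderiv ℝ ψ y (0, 1)) x (0, 1)

/-- Weak divergence-free condition. -/
def WeaklyDivFree (L a : ℝ) (u : ℝ × ℝ → ℝ × ℝ) : Prop :=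
  ∀ φ : ℝ × ℝ → ℝ, ContDiff ℝ (⊤ : ℕ∞) φ → (∀ p : ℝ × ℝ, φ (p.1 + L, p.2) = φ p) →
    ∫ x in dom L a,
      ((u x).1 * fderiv ℝ φ x (1, 0) + (u x).2 * fderiv ℝ φ x (0, 1)) = 0

namespace S16
abbrev E3 := ℝ × (ℝ × ℝ)

/-- directional derivative operator -/
def D (v : E3) (f : E3 → ℝ) : E3 → ℝ := fun p => fderiv ℝ f p v

lemma contDiff_D {f : E3 → ℝ} (hf : ContDiff ℝ (⊤ : ℕ∞) f) (v : E3) : ContDiff ℝ (⊤ : ℕ∞) (D v f) := by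
  have h1 : ContDiff ℝ (⊤ : ℕ∞) (fderiv ℝ f) := hf.fderiv_right (by simp)
  exact (ContinuousLinearMap.apply ℝ ℝ v).contDiff.comp h1

lemma D_comm {f : E3 → ℝ} (hf : ContDiff ℝ (⊤ : ℕ∞) f) (u v : E3) : D u (D v f) = D v (D u f) := by
  funext p
  have hd1 : Differentiable ℝ f := hf.differentiable (by simp)
  have hdf : ContDiff ℝ (⊤ : ℕ∞) (fderiv ℝ f) := hf.fderiv_right (by simp)
  have h2 : ∀ q : E3, DifferentiableAt ℝ (fderiv ℝ f) q := fun q => (hdf.differentiable (by simp)) q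
  have key : ∀ a : E3, ∀ q : E3, fderiv ℝ (fun y => fderiv ℝ f y a) q
      = (fderiv ℝ (fderiv ℝ f) q).flip a := by
    intro a q
    have := fderiv_clm_apply (h2 q) (differentiableAt_const a)
    simpa using this
  have hsym := second_derivative_symmetric (f := f) (f' := fderiv ℝ f)
    (f'' := fderiv ℝ (fderiv ℝ f) p) (fun y => (hd1 y).hasFDerivAt) ((h2 p).hasFDerivAt) u v
  show fderiv ℝ (fun y => fderiv ℝ f y v) p u = fderiv ℝ (fun y => fderiv ℝ f y u) p v
  rw [key v p, key u p]
  simpa using hsym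

lemma support_D {f : E3 → ℝ} (v : E3) : tsupport (D v f) ⊆ tsupport f := by
  apply closure_minimal _ (isClosed_tsupport f)
  intro p hp
  have h1 : fderiv ℝ f p ≠ 0 := by
    intro h
    exact hp (by simp [D, h])
  exact support_fderiv_subset ℝ h1


lemma fderiv_slice {f : E3 → ℝ} (hf : ContDiff ℝ (⊤ : ℕ∞) f) (t : ℝ) (x v : ℝ × ℝ) :
    fderiv ℝ (fun y : ℝ × ℝ => f (t, y)) x v = D (0, v) f (t, x) := by
  have hι : HasFDerivAt (fun y : ℝ × ℝ => ((t, y) : E3))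
      (((0 : (ℝ × ℝ) →L[ℝ] ℝ)).prod (ContinuousLinearMap.id ℝ (ℝ × ℝ))) x :=
    (hasFDerivAt_const t x).prodMk (hasFDerivAt_id x)
  have hc : HasFDerivAt (fun y : ℝ × ℝ => f (t, y))
      ((fderiv ℝ f (t, x)).comp ((0 : (ℝ × ℝ) →L[ℝ] ℝ).prod (ContinuousLinearMap.id ℝ (ℝ × ℝ)))) x :=
    ((hf.differentiable (by simp) (t, x)).hasFDerivAt).comp x hι
  rw [hc.fderiv]
  simp [D]

lemma hasDerivAt_tslice {f : E3 → ℝ} (hf : ContDiff ℝ (⊤ : ℕ∞) f) (t : ℝ) (x : ℝ × ℝ) :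
    HasDerivAt (fun s => f (s, x)) (D (1, (0 : ℝ × ℝ)) f (t, x)) t := by
  have hσ : HasDerivAt (fun s : ℝ => ((s, x) : E3)) ((1 : ℝ), (0 : ℝ × ℝ)) t :=
    (hasDerivAt_id t).prodMk (hasDerivAt_const t x)
  exact ((hf.differentiable (by simp) (t, x)).hasFDerivAt).comp_hasDerivAt t hσ

def et : E3 := (1, (0, 0))
def ex : E3 := (0, (1, 0))
def ez : E3 := (0, (0, 1))

def Lam (f : E3 → ℝ) : E3 → ℝ := fun p => D ex (D ex f) p + D ez (D ez f) p

lemma contDiff_Lam {f : E3 → ℝ} (hf : ContDiff ℝ (⊤ : ℕ∞) f) : ContDiff ℝ (⊤ : ℕ∞) (Lam f) :=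
  (contDiff_D (contDiff_D hf ex) ex).add (contDiff_D (contDiff_D hf ez) ez)

lemma support_Lam {f : E3 → ℝ} : tsupport (Lam f) ⊆ tsupport f := by
  apply closure_minimal _ (isClosed_tsupport f)
  intro p hp
  have : D ex (D ex f) p ≠ 0 ∨ D ez (D ez f) p ≠ 0 := by
    by_contra h
    push_neg at h
    exact hp (by simp [Lam, h.1, h.2])
  rcases this with h | h
  · exact support_D ex (support_D ex (subset_closure h))
  · exact support_D ez (support_D ez (subset_closure h))

lemma lap_slice {f : E3 → ℝ} (hf : ContDiff ℝ (⊤ : ℕ∞) f) (t : ℝ) (x : ℝ × ℝ) :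
    lap (fun y => f (t, y)) x = Lam f (t, x) := by
  unfold lap Lam
  have h1 : (fun y : ℝ × ℝ => fderiv ℝ (fun y' : ℝ × ℝ => f (t, y')) y (1, 0))
      = fun y => D ex f (t, y) := by
    funext y; exact fderiv_slice hf t y (1, 0)
  have h2 : (fun y : ℝ × ℝ => fderiv ℝ (fun y' : ℝ × ℝ => f (t, y')) y (0, 1))
      = fun y => D ez f (t, y) := by
    funext y; exact fderiv_slice hf t y (0, 1)
  rw [h1, h2, fderiv_slice (contDiff_D hf ex) t x (1, 0),
    fderiv_slice (contDiff_D hf ez) t x (0, 1)]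
  rfl

lemma pgrad_slice {f : E3 → ℝ} (hf : ContDiff ℝ (⊤ : ℕ∞) f) (t : ℝ) (x : ℝ × ℝ) :
    pgrad (fun y => f (t, y)) x = (-(D ez f (t, x)), D ex f (t, x)) := by
  unfold pgrad
  rw [fderiv_slice hf t x (0, 1), fderiv_slice hf t x (1, 0)]
  rfl

lemma tslice_eq {f : E3 → ℝ} (hf : ContDiff ℝ (⊤ : ℕ∞) f) (t : ℝ) :
    (fun x : ℝ × ℝ => deriv (fun s => f (s, x)) t) = fun x => D et f (t, x) := by
  funext x
  exact (hasDerivAt_tslice hf t x).deriv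

lemma D_add {f g : E3 → ℝ} (hf : ContDiff ℝ (⊤ : ℕ∞) f) (hg : ContDiff ℝ (⊤ : ℕ∞) g) (v : E3) :
    D v (fun p => f p + g p) = fun p => D v f p + D v g p := by
  funext p
  show fderiv ℝ (fun p => f p + g p) p v = _
  rw [fderiv_fun_add ((hf.differentiable (by simp)) p) ((hg.differentiable (by simp)) p)]
  rfl

lemma Lam_D_et {f : E3 → ℝ} (hf : ContDiff ℝ (⊤ : ℕ∞) f) : Lam (D et f) = D et (Lam f) := by
  have hx : D ex (D ex (D et f)) = D et (D ex (D ex f)) := by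
    rw [D_comm hf ex et, D_comm (contDiff_D hf ex) ex et]
  have hz : D ez (D ez (D et f)) = D et (D ez (D ez f)) := by
    rw [D_comm hf ez et, D_comm (contDiff_D hf ez) ez et]
  unfold Lam
  rw [hx, hz, D_add (contDiff_D (contDiff_D hf ex) ex) (contDiff_D (contDiff_D hf ez) ez) et]

def Qv (χ : E3 → ℝ) (t : ℝ) (x : ℝ × ℝ) : ℝ × ℝ :=
  (-(D ez (Lam χ) (t, x)), D ex (Lam χ) (t, x))

def Pv (χ : E3 → ℝ) (t : ℝ) (x : ℝ × ℝ) : ℝ × ℝ :=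
  (-(D et (D ez (Lam χ)) (t, x)), D et (D ex (Lam χ)) (t, x))

variable {χ : E3 → ℝ}

lemma target_pgrad (hχ : ContDiff ℝ (⊤ : ℕ∞) χ) (t : ℝ) (x : ℝ × ℝ) :
    pgrad (fun x' => deriv (fun s => χ (s, x')) t + lap (fun y => χ (t, y)) x') x
      = pgrad (fun x' => deriv (fun s => χ (s, x')) t) x + Qv χ t x := by
  have hG : ContDiff ℝ (⊤ : ℕ∞) (fun p => D et χ p + Lam χ p) :=
    (contDiff_D hχ et).add (contDiff_Lam hχ)
  have h1 : (fun x' : ℝ × ℝ => deriv (fun s => χ (s, x')) t + lap (fun y => χ (t, y)) x')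
      = fun x' => (fun p => D et χ p + Lam χ p) (t, x') := by
    funext x'
    rw [congrFun (tslice_eq hχ t) x', lap_slice hχ t x']
  rw [h1, tslice_eq hχ t, pgrad_slice hG t x, pgrad_slice (contDiff_D hχ et) t x]
  have hz := congrFun (D_add (contDiff_D hχ et) (contDiff_Lam hχ) ez) (t, x)
  have hx := congrFun (D_add (contDiff_D hχ et) (contDiff_Lam hχ) ex) (t, x)
  simp only [Qv, Prod.mk_add_mk, Prod.mk.injEq]
  constructor
  · rw [hz]; ring
  · rw [hx]

lemma pgrad_lap_eq (hχ : ContDiff ℝ (⊤ : ℕ∞) χ) (t : ℝ) (x : ℝ × ℝ) :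
    pgrad (lap (fun x' => deriv (fun s => χ (s, x')) t)) x = Pv χ t x := by
  rw [tslice_eq hχ t]
  have h3 : lap (fun x' => D et χ (t, x')) = fun x' => Lam (D et χ) (t, x') := by
    funext x'; exact lap_slice (contDiff_D hχ et) t x'
  rw [h3, Lam_D_et hχ, pgrad_slice (contDiff_D (contDiff_Lam hχ) et) t x,
    D_comm (contDiff_Lam hχ) ez et, D_comm (contDiff_Lam hχ) ex et]
  rfl

lemma hasDerivAt_Qv (hχ : ContDiff ℝ (⊤ : ℕ∞) χ) (t : ℝ) (x : ℝ × ℝ) :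
    HasDerivAt (fun τ => Qv χ τ x) (Pv χ t x) t := by
  have h1 := hasDerivAt_tslice (contDiff_D (contDiff_Lam hχ) ez) t x
  have h2 := hasDerivAt_tslice (contDiff_D (contDiff_Lam hχ) ex) t x
  exact (h1.neg).prodMk h2

lemma Qv_eq_zero (h : (t, x) ∉ tsupport χ) : Qv χ t x = 0 := by
  have h1 : D ez (Lam χ) (t, x) = 0 :=
    image_eq_zero_of_notMem_tsupport (fun hc => h (support_Lam (support_D ez hc)))
  have h2 : D ex (Lam χ) (t, x) = 0 :=
    image_eq_zero_of_notMem_tsupport (fun hc => h (support_Lam (support_D ex hc)))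
  simp [Qv, h1, h2]

lemma bdd_of_supp {X : Type*} [PseudoMetricSpace X] {u : X → ℝ} (hu : Continuous u)
    (hK : IsCompact (tsupport u)) : ∃ C, 0 ≤ C ∧ ∀ p, |u p| ≤ C := by
  obtain ⟨C, hC⟩ := hK.exists_bound_of_continuousOn hu.continuousOn
  refine ⟨max C 0, le_max_right _ _, fun p => ?_⟩
  by_cases hp : p ∈ tsupport u
  · exact le_trans (hC p hp) (le_max_left _ _)
  · simp [image_eq_zero_of_notMem_tsupport hp, le_max_right]

lemma isFiniteMeasure_dom (L a : ℝ) : IsFiniteMeasure (volume.restrict (dom L a)) := by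
  constructor
  rw [Measure.restrict_apply_univ]
  exact Bornology.IsBounded.measure_lt_top
    ((Metric.isBounded_Ioo 0 L).prod (Metric.isBounded_Ioo 0 a))

lemma ip_def (L a : ℝ) (f g : ℝ × ℝ → ℝ × ℝ) :
    ip L a f g = ∫ x, ((f x).1 * (g x).1 + (f x).2 * (g x).2)
      ∂(volume.restrict (dom L a)) := rfl

lemma integrand_integrable {μ : Measure (ℝ × ℝ)} {f G : ℝ × ℝ → ℝ × ℝ}
    (hf : Integrable f μ) (hGm : AEStronglyMeasurable G μ) {b : ℝ} (hGb : ∀ x, ‖G x‖ ≤ b) :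
    Integrable (fun x => (f x).1 * (G x).1 + (f x).2 * (G x).2) μ := by
  have hf1 : AEStronglyMeasurable (fun x => (f x).1) μ :=
    continuous_fst.comp_aestronglyMeasurable hf.aestronglyMeasurable
  have hf2 : AEStronglyMeasurable (fun x => (f x).2) μ :=
    continuous_snd.comp_aestronglyMeasurable hf.aestronglyMeasurable
  have hG1 : AEStronglyMeasurable (fun x => (G x).1) μ :=
    continuous_fst.comp_aestronglyMeasurable hGm
  have hG2 : AEStronglyMeasurable (fun x => (G x).2) μ :=
    continuous_snd.comp_aestronglyMeasurable hGm
  refine Integrable.mono' ((hf.norm.const_mul (2 * b))) ((hf1.mul hG1).add (hf2.mul hG2)) ?_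
  filter_upwards with x
  have h1 : |(f x).1| ≤ ‖f x‖ := norm_fst_le (f x)
  have h2 : |(f x).2| ≤ ‖f x‖ := norm_snd_le (f x)
  have h3 : |(G x).1| ≤ b := le_trans (norm_fst_le (G x)) (hGb x)
  have h4 : |(G x).2| ≤ b := le_trans (norm_snd_le (G x)) (hGb x)
  have h5 : ‖(f x).1 * (G x).1 + (f x).2 * (G x).2‖ ≤ |(f x).1| * |(G x).1| + |(f x).2| * |(G x).2| := by
    rw [Real.norm_eq_abs]
    exact le_trans (abs_add_le _ _) (by rw [abs_mul, abs_mul])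
  have h6 : 0 ≤ ‖f x‖ := norm_nonneg _
  have h7 : (0:ℝ) ≤ |(f x).1| := abs_nonneg _
  have h8 : (0:ℝ) ≤ |(f x).2| := abs_nonneg _
  calc ‖(f x).1 * (G x).1 + (f x).2 * (G x).2‖
      ≤ |(f x).1| * |(G x).1| + |(f x).2| * |(G x).2| := h5
    _ ≤ ‖f x‖ * b + ‖f x‖ * b := by
        gcongr <;> first | exact le_trans (abs_nonneg _) h3 | assumption
    _ = 2 * b * ‖f x‖ := by ring

lemma comp_integrable {μ : Measure (ℝ × ℝ)} {f : ℝ × ℝ → ℝ × ℝ} (hf : Integrable f μ) :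
    Integrable (fun x => (f x).1) μ ∧ Integrable (fun x => (f x).2) μ :=
  ⟨Integrable.mono' hf.norm (continuous_fst.comp_aestronglyMeasurable hf.aestronglyMeasurable)
      (Filter.Eventually.of_forall fun x => norm_fst_le _),
    Integrable.mono' hf.norm (continuous_snd.comp_aestronglyMeasurable hf.aestronglyMeasurable)
      (Filter.Eventually.of_forall fun x => norm_snd_le _)⟩

lemma int_mul {μ : Measure (ℝ × ℝ)} {u : ℝ × ℝ → ℝ} (hu : Integrable u μ)
    {g : ℝ × ℝ → ℝ} (hgm : AEStronglyMeasurable g μ) {b : ℝ} (hb : ∀ x, |g x| ≤ b) :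
    Integrable (fun x => u x * g x) μ := by
  refine Integrable.mono' (hu.norm.const_mul b) (hu.aestronglyMeasurable.mul hgm) ?_
  filter_upwards with x
  rw [Real.norm_eq_abs, abs_mul, Real.norm_eq_abs, mul_comm b]
  exact mul_le_mul_of_nonneg_left (hb x) (abs_nonneg _)

lemma ubp (L a T : ℝ) (w : ℝ → ℝ × ℝ → ℝ × ℝ)
    (hw2 : ∀ t ∈ Set.Icc (0 : ℝ) T, MemLp (w t) 2 (volume.restrict (dom L a)))
    (hwcont : ∀ g : ℝ × ℝ → ℝ × ℝ, MemLp g 2 (volume.restrict (dom L a)) →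
      ContinuousOn (fun t => ip L a (w t) g) (Set.Icc 0 T)) :
    ∃ C : ℝ, 0 ≤ C ∧ ∀ s ∈ Set.Icc (0 : ℝ) T, ∀ (G : ℝ × ℝ → ℝ × ℝ) (b : ℝ),
      AEStronglyMeasurable G (volume.restrict (dom L a)) → (∀ x, ‖G x‖ ≤ b) →
      |ip L a (w s) G| ≤ C * b := by
  set μ := volume.restrict (dom L a) with hμ
  haveI : IsFiniteMeasure μ := isFiniteMeasure_dom L a
  set ι := ↥(Set.Icc (0 : ℝ) T)
  have hm1 : ∀ i : ι, MemLp (fun x => (w i x).1) 2 μ := fun i =>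
    (hw2 i i.2).of_le (continuous_fst.comp_aestronglyMeasurable (hw2 i i.2).1)
      (Filter.Eventually.of_forall fun x => norm_fst_le _)
  have hm2 : ∀ i : ι, MemLp (fun x => (w i x).2) 2 μ := fun i =>
    (hw2 i i.2).of_le (continuous_snd.comp_aestronglyMeasurable (hw2 i i.2).1)
      (Filter.Eventually.of_forall fun x => norm_snd_le _)
  set V1 : ι → Lp ℝ 2 μ := fun i => ((hm1 i).toLp _) with hV1
  set V2 : ι → Lp ℝ 2 μ := fun i => ((hm2 i).toLp _) with hV2
  have hinner : ∀ (v : Lp ℝ 2 μ) (u : Lp ℝ 2 μ),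
      (inner ℝ v u : ℝ) = ∫ x, v x * u x ∂μ := fun v u => by
    rw [L2.inner_def]
    congr 1
    funext x
    exact Real.inner_apply _ _
  have hinner1 : ∀ (i : ι) (g : ℝ × ℝ → ℝ) (hg : MemLp g 2 μ),
      (inner ℝ (V1 i) (hg.toLp g) : ℝ) = ∫ x, (w i x).1 * g x ∂μ := by
    intro i g hg
    rw [hinner]
    apply MeasureTheory.integral_congr_ae
    filter_upwards [(hm1 i).coeFn_toLp, hg.coeFn_toLp] with x h1 h2
    rw [h1, h2]
  have hinner2 : ∀ (i : ι) (g : ℝ × ℝ → ℝ) (hg : MemLp g 2 μ),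
      (inner ℝ (V2 i) (hg.toLp g) : ℝ) = ∫ x, (w i x).2 * g x ∂μ := by
    intro i g hg
    rw [hinner]
    apply MeasureTheory.integral_congr_ae
    filter_upwards [(hm2 i).coeFn_toLp, hg.coeFn_toLp] with x h1 h2
    rw [h1, h2]
  have key : ∀ (V : ι → Lp ℝ 2 μ),
      (∀ (u : Lp ℝ 2 μ), ∃ Cu, ∀ i, ‖(inner ℝ (V i) u : ℝ)‖ ≤ Cu) →
      ∃ C, ∀ i, ‖V i‖ ≤ C := by
    intro V hpt
    obtain ⟨C, hC⟩ := banach_steinhaus (g := fun i : ι => innerSL ℝ (V i)) (by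
      intro u
      obtain ⟨Cu, hCu⟩ := hpt u
      exact ⟨Cu, fun i => hCu i⟩)
    refine ⟨C, fun i => ?_⟩
    have := hC i
    rwa [innerSL_apply_norm] at this
  have hpt1 : ∀ (u : Lp ℝ 2 μ), ∃ Cu, ∀ i : ι, ‖(inner ℝ (V1 i) u : ℝ)‖ ≤ Cu := by
    intro u
    set g : ℝ × ℝ → ℝ × ℝ := fun x => (u x, (0:ℝ)) with hg
    have hgm : MemLp g 2 μ := by
      refine (Lp.memLp u).of_le
        ((Lp.aestronglyMeasurable u).prodMk aestronglyMeasurable_const) ?_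
      filter_upwards with x
      simp [hg, Prod.norm_def]
    obtain ⟨Cu, hCu⟩ := isCompact_Icc.exists_bound_of_continuousOn (hwcont g hgm)
    refine ⟨Cu, fun i => ?_⟩
    have heq : (inner ℝ (V1 i) u : ℝ) = ip L a (w i) g := by
      have hu : ((Lp.memLp u).toLp ⇑u) = u := MeasureTheory.Lp.toLp_coeFn u (Lp.memLp u)
      have h2 := hinner1 i (⇑u) (Lp.memLp u)
      rw [hu] at h2
      rw [h2, ip_def]
      apply MeasureTheory.integral_congr_ae
      filter_upwards with x
      simp [hg]
    rw [Real.norm_eq_abs, heq]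
    have := hCu i i.2
    rwa [Real.norm_eq_abs] at this
  have hpt2 : ∀ (u : Lp ℝ 2 μ), ∃ Cu, ∀ i : ι, ‖(inner ℝ (V2 i) u : ℝ)‖ ≤ Cu := by
    intro u
    set g : ℝ × ℝ → ℝ × ℝ := fun x => ((0:ℝ), u x) with hg
    have hgm : MemLp g 2 μ := by
      refine (Lp.memLp u).of_le
        (aestronglyMeasurable_const.prodMk (Lp.aestronglyMeasurable u)) ?_
      filter_upwards with x
      simp [hg, Prod.norm_def]
    obtain ⟨Cu, hCu⟩ := isCompact_Icc.exists_bound_of_continuousOn (hwcont g hgm)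
    refine ⟨Cu, fun i => ?_⟩
    have heq : (inner ℝ (V2 i) u : ℝ) = ip L a (w i) g := by
      have hu : ((Lp.memLp u).toLp ⇑u) = u := MeasureTheory.Lp.toLp_coeFn u (Lp.memLp u)
      have h2 := hinner2 i (⇑u) (Lp.memLp u)
      rw [hu] at h2
      rw [h2, ip_def]
      apply MeasureTheory.integral_congr_ae
      filter_upwards with x
      simp [hg]
    rw [Real.norm_eq_abs, heq]
    have := hCu i i.2
    rwa [Real.norm_eq_abs] at this
  obtain ⟨C1, hC1⟩ := key V1 hpt1
  obtain ⟨C2, hC2⟩ := key V2 hpt2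
  set m := ((μ Set.univ) ^ ((2 : ℝ≥0∞).toReal⁻¹)).toReal with hm
  have hm0 : 0 ≤ m := ENNReal.toReal_nonneg
  have hnorm : ∀ (g : ℝ × ℝ → ℝ) (hg : MemLp g 2 μ) (b : ℝ), 0 ≤ b → (∀ x, |g x| ≤ b) →
      ‖hg.toLp g‖ ≤ m * b := by
    intro g hg b hb0 hb
    rw [Lp.norm_toLp]
    have h1 : eLpNorm g 2 μ ≤ (μ Set.univ) ^ ((2 : ℝ≥0∞).toReal⁻¹) * ENNReal.ofReal b :=
      eLpNorm_le_of_ae_bound (Filter.Eventually.of_forall fun x => by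
        rw [Real.norm_eq_abs]; exact hb x)
    have h2 : ((μ Set.univ) ^ ((2 : ℝ≥0∞).toReal⁻¹) * ENNReal.ofReal b) ≠ ⊤ :=
      ENNReal.mul_ne_top (ENNReal.rpow_ne_top_of_nonneg (by positivity) (measure_ne_top μ _))
        ENNReal.ofReal_ne_top
    calc (eLpNorm g 2 μ).toReal ≤ ((μ Set.univ) ^ ((2 : ℝ≥0∞).toReal⁻¹) * ENNReal.ofReal b).toReal :=
          ENNReal.toReal_mono h2 h1
      _ = m * b := by rw [ENNReal.toReal_mul, ENNReal.toReal_ofReal hb0]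
  refine ⟨max ((C1 + C2) * m) 0, le_max_right _ _, ?_⟩
  intro s hs G b hGm hGb
  have hb0 : (0:ℝ) ≤ b := le_trans (norm_nonneg (G (0, 0))) (hGb (0, 0))
  have hG1 : MemLp (fun x => (G x).1) 2 μ := MemLp.of_bound
    (continuous_fst.comp_aestronglyMeasurable hGm) b
    (Filter.Eventually.of_forall fun x => le_trans (norm_fst_le _) (hGb x))
  have hG2 : MemLp (fun x => (G x).2) 2 μ := MemLp.of_bound
    (continuous_snd.comp_aestronglyMeasurable hGm) b
    (Filter.Eventually.of_forall fun x => le_trans (norm_snd_le _) (hGb x))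
  have hws : Integrable (w s) μ := (hw2 s hs).integrable one_le_two
  have hi1 : Integrable (fun x => (w s x).1 * (G x).1) μ :=
    int_mul (comp_integrable hws).1 hG1.1
      (fun x => by simpa using le_trans (norm_fst_le (G x)) (hGb x))
  have hi2 : Integrable (fun x => (w s x).2 * (G x).2) μ :=
    int_mul (comp_integrable hws).2 hG2.1
      (fun x => by simpa using le_trans (norm_snd_le (G x)) (hGb x))
  have hsplit : ip L a (w s) G
      = (∫ x, (w s x).1 * (G x).1 ∂μ) + ∫ x, (w s x).2 * (G x).2 ∂μ := by
    rw [ip_def, ← MeasureTheory.integral_add hi1 hi2]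
  have e1 : (∫ x, (w s x).1 * (G x).1 ∂μ) = (inner ℝ (V1 ⟨s, hs⟩) (hG1.toLp _) : ℝ) :=
    (hinner1 ⟨s, hs⟩ _ hG1).symm
  have e2 : (∫ x, (w s x).2 * (G x).2 ∂μ) = (inner ℝ (V2 ⟨s, hs⟩) (hG2.toLp _) : ℝ) :=
    (hinner2 ⟨s, hs⟩ _ hG2).symm
  have hC10 : 0 ≤ C1 := le_trans (norm_nonneg (V1 ⟨s, hs⟩)) (hC1 ⟨s, hs⟩)
  have hC20 : 0 ≤ C2 := le_trans (norm_nonneg (V2 ⟨s, hs⟩)) (hC2 ⟨s, hs⟩)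
  have b1 : |(inner ℝ (V1 ⟨s, hs⟩) (hG1.toLp _) : ℝ)| ≤ C1 * (m * b) := by
    refine le_trans (abs_real_inner_le_norm _ _) ?_
    have := mul_le_mul (hC1 ⟨s, hs⟩) (hnorm _ hG1 b hb0
      (fun x => by simpa using le_trans (norm_fst_le (G x)) (hGb x))) (norm_nonneg _) hC10
    exact this
  have b2 : |(inner ℝ (V2 ⟨s, hs⟩) (hG2.toLp _) : ℝ)| ≤ C2 * (m * b) := by
    refine le_trans (abs_real_inner_le_norm _ _) ?_
    exact mul_le_mul (hC2 ⟨s, hs⟩) (hnorm _ hG2 b hb0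
      (fun x => by simpa using le_trans (norm_snd_le (G x)) (hGb x))) (norm_nonneg _) hC20
  calc |ip L a (w s) G| ≤ |(∫ x, (w s x).1 * (G x).1 ∂μ)| + |∫ x, (w s x).2 * (G x).2 ∂μ| := by
        rw [hsplit]; exact abs_add_le _ _
    _ ≤ C1 * (m * b) + C2 * (m * b) := by rw [e1, e2]; exact add_le_add b1 b2
    _ = (C1 + C2) * m * b := by ring
    _ ≤ max ((C1 + C2) * m) 0 * b := mul_le_mul_of_nonneg_right (le_max_left _ _) hb0

lemma tsupport_compact {T L a : ℝ} (χ : E3 → ℝ)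
    (hsupp : tsupport χ ⊆ Set.Ioo 0 T ×ˢ dom L a) : IsCompact (tsupport χ) := by
  have hb : Bornology.IsBounded (Set.Ioo 0 T ×ˢ dom L a) :=
    (Metric.isBounded_Ioo 0 T).prod ((Metric.isBounded_Ioo 0 L).prod (Metric.isBounded_Ioo 0 a))
  exact Metric.isCompact_of_isClosed_isBounded (isClosed_tsupport χ) (hb.subset hsupp)

lemma continuous_Qv {χ : E3 → ℝ} (hχ : ContDiff ℝ (⊤ : ℕ∞) χ) :
    Continuous (fun p : E3 => Qv χ p.1 p.2) := by
  have h1 : Continuous (D ez (Lam χ)) := (contDiff_D (contDiff_Lam hχ) ez).continuous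
  have h2 : Continuous (D ex (Lam χ)) := (contDiff_D (contDiff_Lam hχ) ex).continuous
  exact ((h1.comp (continuous_id)).neg).prodMk (h2.comp (continuous_id))

lemma continuous_Pv {χ : E3 → ℝ} (hχ : ContDiff ℝ (⊤ : ℕ∞) χ) :
    Continuous (fun p : E3 => Pv χ p.1 p.2) := by
  have h1 : Continuous (D et (D ez (Lam χ))) :=
    (contDiff_D (contDiff_D (contDiff_Lam hχ) ez) et).continuous
  have h2 : Continuous (D et (D ex (Lam χ))) :=
    (contDiff_D (contDiff_D (contDiff_Lam hχ) ex) et).continuous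
  exact ((h1.comp (continuous_id)).neg).prodMk (h2.comp (continuous_id))

lemma comp_bound {u1 u2 : E3 → ℝ} {χ : E3 → ℝ} (hc1 : Continuous u1) (hc2 : Continuous u2)
    (hs1 : tsupport u1 ⊆ tsupport χ) (hs2 : tsupport u2 ⊆ tsupport χ)
    (hK : IsCompact (tsupport χ)) :
    ∃ C, 0 ≤ C ∧ ∀ p : E3, ‖((-(u1 p), u2 p) : ℝ × ℝ)‖ ≤ C := by
  obtain ⟨C1, hC10, hC1⟩ := bdd_of_supp hc1
    (hK.of_isClosed_subset (isClosed_tsupport u1) hs1)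
  obtain ⟨C2, hC20, hC2⟩ := bdd_of_supp hc2
    (hK.of_isClosed_subset (isClosed_tsupport u2) hs2)
  refine ⟨max C1 C2, le_max_of_le_left hC10, fun p => ?_⟩
  rw [Prod.norm_def]
  apply max_le_max
  · rw [Real.norm_eq_abs, abs_neg]; exact hC1 p
  · rw [Real.norm_eq_abs]; exact hC2 p

lemma Qv_bound {χ : E3 → ℝ} (hχ : ContDiff ℝ (⊤ : ℕ∞) χ) (hK : IsCompact (tsupport χ)) :
    ∃ C, 0 ≤ C ∧ ∀ t x, ‖Qv χ t x‖ ≤ C := by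
  obtain ⟨C, h0, hC⟩ := comp_bound (χ := χ) ((contDiff_D (contDiff_Lam hχ) ez).continuous)
    ((contDiff_D (contDiff_Lam hχ) ex).continuous)
    (fun p hp => support_Lam (support_D ez hp)) (fun p hp => support_Lam (support_D ex hp)) hK
  exact ⟨C, h0, fun t x => hC (t, x)⟩

lemma Pv_bound {χ : E3 → ℝ} (hχ : ContDiff ℝ (⊤ : ℕ∞) χ) (hK : IsCompact (tsupport χ)) :
    ∃ C, 0 ≤ C ∧ ∀ t x, ‖Pv χ t x‖ ≤ C := by
  obtain ⟨C, h0, hC⟩ := comp_bound (χ := χ)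
    ((contDiff_D (contDiff_D (contDiff_Lam hχ) ez) et).continuous)
    ((contDiff_D (contDiff_D (contDiff_Lam hχ) ex) et).continuous)
    (fun p hp => support_Lam (support_D ez (support_D et hp)))
    (fun p hp => support_Lam (support_D ex (support_D et hp))) hK
  exact ⟨C, h0, fun t x => hC (t, x)⟩

lemma pair_bound {f G : ℝ × ℝ → ℝ × ℝ} {b : ℝ} (hGb : ∀ x, ‖G x‖ ≤ b) (x : ℝ × ℝ) :
    ‖(f x).1 * (G x).1 + (f x).2 * (G x).2‖ ≤ 2 * b * ‖f x‖ := by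
  have h3 : |(G x).1| ≤ b := le_trans (norm_fst_le (G x)) (hGb x)
  have h4 : |(G x).2| ≤ b := le_trans (norm_snd_le (G x)) (hGb x)
  calc ‖(f x).1 * (G x).1 + (f x).2 * (G x).2‖
      ≤ |(f x).1| * |(G x).1| + |(f x).2| * |(G x).2| := by
        rw [Real.norm_eq_abs]
        exact le_trans (abs_add_le _ _) (by rw [abs_mul, abs_mul])
    _ ≤ ‖f x‖ * b + ‖f x‖ * b :=
        add_le_add
          (mul_le_mul (by simpa using norm_fst_le (f x)) h3 (abs_nonneg _) (norm_nonneg _))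
          (mul_le_mul (by simpa using norm_snd_le (f x)) h4 (abs_nonneg _) (norm_nonneg _))
    _ = 2 * b * ‖f x‖ := by ring

lemma inner_ftc {L a T : ℝ} {χ : E3 → ℝ} (hχ : ContDiff ℝ (⊤ : ℕ∞) χ)
    (hsupp : tsupport χ ⊆ Set.Ioo 0 T ×ˢ dom L a)
    {v : ℝ × ℝ → ℝ × ℝ} (hv : Integrable v (volume.restrict (dom L a)))
    {s : ℝ} (hs : s ∈ Set.Icc (0 : ℝ) T) :
    ∫ t in s..T, (∫ x, ((v x).1 * (Pv χ t x).1 + (v x).2 * (Pv χ t x).2)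
        ∂(volume.restrict (dom L a)))
      = - ∫ x, ((v x).1 * (Qv χ s x).1 + (v x).2 * (Qv χ s x).2)
        ∂(volume.restrict (dom L a)) := by
  set μ := volume.restrict (dom L a) with hμdef
  obtain ⟨CP, hCP0, hCP⟩ := Pv_bound hχ (tsupport_compact χ hsupp)
  have hsT : s ≤ T := hs.2
  set ν := volume.restrict (Set.Ioc s T) with hνdef
  haveI : IsFiniteMeasure ν := by
    constructor
    rw [Measure.restrict_apply_univ]
    simp [Real.volume_Ioc]
  haveI : IsFiniteMeasure μ := isFiniteMeasure_dom L a
  have hPvc : Continuous (fun p : E3 => Pv χ p.1 p.2) := continuous_Pv hχ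
  -- joint a.e. strong measurability of the integrand on the product
  have h1 : AEStronglyMeasurable (fun z : ℝ × (ℝ × ℝ) => (v z.2).1) (ν.prod μ) := by
    have := (continuous_fst.comp_aestronglyMeasurable
      hv.aestronglyMeasurable).comp_quasiMeasurePreserving
      (Measure.quasiMeasurePreserving_snd (μ := ν) (ν := μ))
    exact this
  have h1' : AEStronglyMeasurable (fun z : ℝ × (ℝ × ℝ) => (v z.2).2) (ν.prod μ) := by
    have := (continuous_snd.comp_aestronglyMeasurable
      hv.aestronglyMeasurable).comp_quasiMeasurePreserving
      (Measure.quasiMeasurePreserving_snd (μ := ν) (ν := μ))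
    exact this
  have h2 : Continuous (fun z : ℝ × (ℝ × ℝ) => (Pv χ z.1 z.2).1) := continuous_fst.comp hPvc
  have h2' : Continuous (fun z : ℝ × (ℝ × ℝ) => (Pv χ z.1 z.2).2) := continuous_snd.comp hPvc
  have hmeas : AEStronglyMeasurable
      (Function.uncurry (fun t x => (v x).1 * (Pv χ t x).1 + (v x).2 * (Pv χ t x).2))
      (ν.prod μ) :=
    (h1.mul h2.aestronglyMeasurable).add (h1'.mul h2'.aestronglyMeasurable)
  -- sections are integrable
  have hsec : ∀ t : ℝ, Integrable (fun x => (v x).1 * (Pv χ t x).1 + (v x).2 * (Pv χ t x).2) μ :=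
    fun t => integrand_integrable hv
      ((hPvc.comp (continuous_const.prodMk continuous_id)).aestronglyMeasurable)
      (fun x => hCP t x)
  -- the integrand is integrable on the product
  have hint : Integrable
      (Function.uncurry (fun t x => (v x).1 * (Pv χ t x).1 + (v x).2 * (Pv χ t x).2))
      (ν.prod μ) := by
    rw [integrable_prod_iff hmeas]
    constructor
    · filter_upwards with t
      exact hsec t
    · have hSM := hmeas.norm.integral_prod_right'
      refine Integrable.mono' (integrable_const (2 * CP * ∫ x, ‖v x‖ ∂μ)) hSM ?_
      filter_upwards with t
      have hnn : 0 ≤ ∫ x, ‖Function.uncurry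
          (fun t x => (v x).1 * (Pv χ t x).1 + (v x).2 * (Pv χ t x).2) (t, x)‖ ∂μ :=
        integral_nonneg fun x => norm_nonneg _
      rw [Real.norm_eq_abs, abs_of_nonneg hnn]
      have := integral_mono ((hsec t).norm) ((hv.norm.const_mul (2 * CP)))
        (fun x => pair_bound (G := fun x => Pv χ t x) (fun x => hCP t x) x)
      calc (∫ x, ‖(v x).1 * (Pv χ t x).1 + (v x).2 * (Pv χ t x).2‖ ∂μ)
          ≤ ∫ x, 2 * CP * ‖v x‖ ∂μ := this
        _ = 2 * CP * ∫ x, ‖v x‖ ∂μ := by rw [MeasureTheory.integral_const_mul]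
  -- Fubini
  have hswap := MeasureTheory.integral_integral_swap
    (f := fun t x => (v x).1 * (Pv χ t x).1 + (v x).2 * (Pv χ t x).2) hint
  rw [intervalIntegral.integral_of_le hsT]
  rw [hswap]
  -- pointwise FTC in the t-variable
  have hptwise : ∀ x : ℝ × ℝ,
      (∫ t, ((v x).1 * (Pv χ t x).1 + (v x).2 * (Pv χ t x).2) ∂ν)
        = -((v x).1 * (Qv χ s x).1 + (v x).2 * (Qv χ s x).2) := by
    intro x
    have hder : ∀ τ : ℝ, HasDerivAt (fun τ => (v x).1 * (Qv χ τ x).1 + (v x).2 * (Qv χ τ x).2)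
        ((v x).1 * (Pv χ τ x).1 + (v x).2 * (Pv χ τ x).2) τ := by
      intro τ
      have hz := hasDerivAt_tslice (contDiff_D (contDiff_Lam hχ) ez) τ x
      have hx := hasDerivAt_tslice (contDiff_D (contDiff_Lam hχ) ex) τ x
      exact ((hz.neg.const_mul ((v x).1)).add (hx.const_mul ((v x).2)))
    have hcont : IntervalIntegrable
        (fun t => ((v x).1 * (Pv χ t x).1 + (v x).2 * (Pv χ t x).2)) volume s T := by
      apply Continuous.intervalIntegrable
      have : Continuous (fun t : ℝ => Pv χ t x) :=
        hPvc.comp (continuous_id.prodMk continuous_const)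
      exact (continuous_const.mul (continuous_fst.comp this)).add
        (continuous_const.mul (continuous_snd.comp this))
    have hftc := intervalIntegral.integral_eq_sub_of_hasDerivAt
      (f := fun τ => (v x).1 * (Qv χ τ x).1 + (v x).2 * (Qv χ τ x).2)
      (fun τ _ => hder τ) hcont
    have hQT : Qv χ T x = 0 := by
      apply Qv_eq_zero
      intro hmem
      exact (lt_irrefl T) (hsupp hmem).1.2
    rw [hνdef, ← intervalIntegral.integral_of_le hsT, hftc]
    simp [hQT]
  rw [MeasureTheory.integral_congr_ae (Filter.Eventually.of_forall hptwise)]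
  rw [MeasureTheory.integral_neg]

def Rv (χ : E3 → ℝ) (t : ℝ) (x : ℝ × ℝ) : ℝ × ℝ :=
  (-(D ez (D et χ) (t, x)), D ex (D et χ) (t, x))

variable {χ : E3 → ℝ}

lemma pgrad_tslice (hχ : ContDiff ℝ (⊤ : ℕ∞) χ) (t : ℝ) (x : ℝ × ℝ) :
    pgrad (fun x' => deriv (fun s => χ (s, x')) t) x = Rv χ t x := by
  rw [tslice_eq hχ t]
  exact pgrad_slice (contDiff_D hχ et) t x

lemma continuous_Rv (hχ : ContDiff ℝ (⊤ : ℕ∞) χ) :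
    Continuous (fun p : E3 => Rv χ p.1 p.2) := by
  have h1 : Continuous (D ez (D et χ)) := (contDiff_D (contDiff_D hχ et) ez).continuous
  have h2 : Continuous (D ex (D et χ)) := (contDiff_D (contDiff_D hχ et) ex).continuous
  exact ((h1.comp continuous_id).neg).prodMk (h2.comp continuous_id)

lemma Rv_bound (hχ : ContDiff ℝ (⊤ : ℕ∞) χ) (hK : IsCompact (tsupport χ)) :
    ∃ C, 0 ≤ C ∧ ∀ t x, ‖Rv χ t x‖ ≤ C := by
  obtain ⟨C, h0, hC⟩ := comp_bound (χ := χ)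
    ((contDiff_D (contDiff_D hχ et) ez).continuous)
    ((contDiff_D (contDiff_D hχ et) ex).continuous)
    (fun p hp => support_D et (support_D ez hp))
    (fun p hp => support_D et (support_D ex hp)) hK
  exact ⟨C, h0, fun t x => hC (t, x)⟩

lemma target_pgrad' (hχ : ContDiff ℝ (⊤ : ℕ∞) χ) (t : ℝ) (x : ℝ × ℝ) :
    pgrad (fun x' => deriv (fun s => χ (s, x')) t + lap (fun y => χ (t, y)) x') x
      = Rv χ t x + Qv χ t x := by
  rw [target_pgrad hχ t x, pgrad_tslice hχ t x]

lemma cont_pair {μ : Measure (ℝ × ℝ)} {v : ℝ × ℝ → ℝ × ℝ} (hv : Integrable v μ)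
    {G : ℝ → ℝ × ℝ → ℝ × ℝ} (hGc : Continuous (fun p : ℝ × (ℝ × ℝ) => G p.1 p.2))
    {b : ℝ} (hGb : ∀ t x, ‖G t x‖ ≤ b) :
    Continuous (fun t => ∫ x, ((v x).1 * (G t x).1 + (v x).2 * (G t x).2) ∂μ) := by
  apply MeasureTheory.continuous_of_dominated (bound := fun x => 2 * b * ‖v x‖)
  · intro t
    exact (integrand_integrable hv
      ((hGc.comp (continuous_const.prodMk continuous_id)).aestronglyMeasurable)
      (fun x => hGb t x)).aestronglyMeasurable
  · intro t
    filter_upwards with x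
    exact pair_bound (G := fun x => G t x) (fun x => hGb t x) x
  · exact hv.norm.const_mul (2 * b)
  · filter_upwards with x
    have hc : Continuous (fun t : ℝ => G t x) := hGc.comp (continuous_id.prodMk continuous_const)
    exact (continuous_const.mul (continuous_fst.comp hc)).add
      (continuous_const.mul (continuous_snd.comp hc))

end S16


/-- if `w ∈ C([0,T];L²)` is weakly divergence free and satisfies the weak
formulation `⟨w(t),φ⟩ = -∫₀ᵗ ⟨w(s),Aφ⟩ ds + M_φ(t)` with vanishing noise term
`M_{∇⊥ψ} ≡ 0` on compactly supported test fields `φ = ∇⊥ψ` (for which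
`A(∇⊥ψ) = -∇⊥(Δψ)`), then `ω = curl w = ∂_x w₂ - ∂_z w₁` solves the heat equation
`∂_t ω = Δω` in the sense of distributions on `(0,T) × 𝒪`, i.e.
`∫∫ ω (∂_t χ + Δχ) = 0` for all test functions `χ`, where
`⟨ω(t),ψ⟩ := -⟨w(t),∇⊥ψ⟩`. -/
theorem stmt_16 (L a T : ℝ) (hL : 0 < L) (ha : 0 < a) (hT : 0 < T)
    (w : ℝ → ℝ × ℝ → ℝ × ℝ)
    -- `w ∈ C([0,T]; L²)`
    (hw2 : ∀ t ∈ Set.Icc (0 : ℝ) T, MemLp (w t) 2 (volume.restrict (dom L a)))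
    (hwcont : ∀ g : ℝ × ℝ → ℝ × ℝ, MemLp g 2 (volume.restrict (dom L a)) →
      ContinuousOn (fun t => ip L a (w t) g) (Set.Icc 0 T))
    (hwdiv : ∀ t ∈ Set.Icc (0 : ℝ) T, WeaklyDivFree L a (w t))
    -- the weak formulation with `M_{∇⊥ψ} ≡ 0`
    (hweak : ∀ ψ : ℝ × ℝ → ℝ, ContDiff ℝ (⊤ : ℕ∞) ψ → tsupport ψ ⊆ dom L a →
      ∀ t ∈ Set.Icc (0 : ℝ) T,
        ip L a (w t) (pgrad ψ) = ∫ s in (0 : ℝ)..t, ip L a (w s) (pgrad (lap ψ))) :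
    ∀ χ : ℝ × (ℝ × ℝ) → ℝ, ContDiff ℝ (⊤ : ℕ∞) χ →
      tsupport χ ⊆ Set.Ioo 0 T ×ˢ dom L a →
      ∫ t in (0 : ℝ)..T,
        ip L a (w t)
          (pgrad fun x =>
            deriv (fun s => χ (s, x)) t + lap (fun x' => χ (t, x')) x) = 0 := by
  
  intro χ hχ hsupp
  have hK := S16.tsupport_compact χ hsupp
  obtain ⟨CP, hCP0, hCP⟩ := S16.Pv_bound hχ hK
  obtain ⟨CQ, hCQ0, hCQ⟩ := S16.Qv_bound hχ hK
  obtain ⟨C, hC0, hC⟩ := S16.ubp L a T w hw2 hwcont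
  set μ := volume.restrict (dom L a) with hμdef
  haveI : IsFiniteMeasure μ := S16.isFiniteMeasure_dom L a
  set ν := volume.restrict (Set.Ioc (0 : ℝ) T) with hνdef
  haveI : IsFiniteMeasure ν := by
    constructor
    rw [Measure.restrict_apply_univ]
    simp [Real.volume_Ioc]
  set cl : ℝ → ℝ := fun s => max 0 (min s T) with hcl
  have hclmem : ∀ s, cl s ∈ Set.Icc (0 : ℝ) T :=
    fun s => ⟨le_max_left _ _, max_le hT.le (min_le_right _ _)⟩
  have hclcont : Continuous cl := continuous_const.max (continuous_id.min continuous_const)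
  have hcleq : ∀ s ∈ Set.Icc (0 : ℝ) T, cl s = s := by
    intro s hs
    simp [hcl, min_eq_left hs.2, max_eq_right hs.1]
  set wc : ℝ → ℝ × ℝ → ℝ × ℝ := fun s => w (cl s) with hwc
  have hwcI : ∀ s, Integrable (wc s) μ := fun s => (hw2 _ (hclmem s)).integrable one_le_two
  have hPvc := S16.continuous_Pv hχ
  have hQvc := S16.continuous_Qv hχ
  have hPvaesm : ∀ t : ℝ, AEStronglyMeasurable (S16.Pv χ t) μ := fun t =>
    (hPvc.comp (continuous_const.prodMk continuous_id)).aestronglyMeasurable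
  have hQvaesm : ∀ t : ℝ, AEStronglyMeasurable (S16.Qv χ t) μ := fun t =>
    (hQvc.comp (continuous_const.prodMk continuous_id)).aestronglyMeasurable
  set H : ℝ → ℝ → ℝ := fun t s => ip L a (wc s) (S16.Pv χ t) with hH
  set gf : ℝ → ℝ := fun s => ip L a (wc s) (S16.Qv χ s) with hgf
  have hHb : ∀ t s, |H t s| ≤ C * CP := fun t s =>
    hC (cl s) (hclmem s) (S16.Pv χ t) CP (hPvaesm t) (hCP t)
  have hgfb : ∀ s, |gf s| ≤ C * CQ := fun s =>
    hC (cl s) (hclmem s) (S16.Qv χ s) CQ (hQvaesm s) (hCQ s)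
  have hHct : ∀ s, Continuous (fun t => H t s) := fun s =>
    S16.cont_pair (hwcI s) hPvc hCP
  have hGct : ∀ s, Continuous (fun t => ip L a (wc s) (S16.Qv χ t)) := fun s =>
    S16.cont_pair (hwcI s) hQvc hCQ
  have hHcs : ∀ t, Continuous (fun s => H t s) := by
    intro t
    have hPm : MemLp (S16.Pv χ t) 2 μ := MemLp.of_bound (hPvaesm t) CP
      (Filter.Eventually.of_forall (hCP t))
    exact (hwcont _ hPm).comp_continuous hclcont hclmem
  have hGcs : ∀ t, Continuous (fun s => ip L a (wc s) (S16.Qv χ t)) := by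
    intro t
    have hQm : MemLp (S16.Qv χ t) 2 μ := MemLp.of_bound (hQvaesm t) CQ
      (Filter.Eventually.of_forall (hCQ t))
    exact (hwcont _ hQm).comp_continuous hclcont hclmem
  have hHSM : StronglyMeasurable (Function.uncurry (fun s t => H t s)) :=
    stronglyMeasurable_uncurry_of_continuous_of_stronglyMeasurable
      (fun t => hHcs t) (fun s => (hHct s).stronglyMeasurable)
  have hGSM : StronglyMeasurable
      (Function.uncurry (fun s t => ip L a (wc s) (S16.Qv χ t))) :=
    stronglyMeasurable_uncurry_of_continuous_of_stronglyMeasurable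
      (fun t => hGcs t) (fun s => (hGct s).stronglyMeasurable)
  have hgfSM : StronglyMeasurable gf :=
    hGSM.comp_measurable (measurable_id.prodMk measurable_id)
  set J : ℝ → ℝ → ℝ := fun t s => if s ≤ t then H t s else 0 with hJdef
  have hJb : ∀ t s, |J t s| ≤ C * CP := by
    intro t s
    by_cases h : s ≤ t
    · simpa [hJdef, h] using hHb t s
    · simp only [hJdef, if_neg h, abs_zero]
      exact mul_nonneg hC0 hCP0
  have hJSM : StronglyMeasurable (fun q : ℝ × ℝ => J q.1 q.2) := by
    have hswapSM : StronglyMeasurable (fun q : ℝ × ℝ => H q.1 q.2) :=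
      hHSM.comp_measurable measurable_swap
    have heq : (fun q : ℝ × ℝ => J q.1 q.2)
        = Set.indicator {q : ℝ × ℝ | q.2 ≤ q.1} (fun q => H q.1 q.2) := by
      funext q
      rw [Set.indicator_apply]
      by_cases h : q.2 ≤ q.1 <;> simp [hJdef, h, Set.mem_setOf_eq]
    rw [heq]
    exact hswapSM.indicator (measurableSet_le measurable_snd measurable_fst)
  have hJSMt : ∀ s, StronglyMeasurable (fun t => J t s) :=
    fun s => hJSM.comp_measurable (measurable_id.prodMk measurable_const)
  have hJSMs : ∀ t, StronglyMeasurable (fun s => J t s) :=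
    fun t => hJSM.comp_measurable (measurable_const.prodMk measurable_id)
  have hIoc_fin : ∀ u v : ℝ, volume (Set.Ioc u v) < ⊤ := fun u v => by
    simp [Real.volume_Ioc]
  have hJIO : ∀ t (u v : ℝ), IntegrableOn (fun s => J t s) (Set.Ioc u v) volume := by
    intro t u v
    refine Integrable.mono' (integrableOn_const (C := C * CP) (hIoc_fin u v).ne)
      ((hJSMs t).aestronglyMeasurable.restrict) ?_
    filter_upwards with s
    rw [Real.norm_eq_abs]
    exact hJb t s
  have hJIOt : ∀ s (u v : ℝ), IntegrableOn (fun t => J t s) (Set.Ioc u v) volume := by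
    intro s u v
    refine Integrable.mono' (integrableOn_const (C := C * CP) (hIoc_fin u v).ne)
      ((hJSMt s).aestronglyMeasurable.restrict) ?_
    filter_upwards with t
    rw [Real.norm_eq_abs]
    exact hJb t s
  have E1 : ∀ t ∈ Set.Icc (0 : ℝ) T, (∫ s in (0 : ℝ)..t, H t s) = ∫ s, J t s ∂ν := by
    intro t ht
    rw [intervalIntegral.integral_of_le ht.1, hνdef]
    have h1 : ∫ s in Set.Ioc (0 : ℝ) t, H t s = ∫ s in Set.Ioc (0 : ℝ) t, J t s :=
      setIntegral_congr_fun measurableSet_Ioc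
        (fun s hs => (if_pos hs.2 : J t s = H t s).symm)
    have h2 : ∫ s in Set.Ioc t T, J t s = 0 := by
      rw [setIntegral_congr_fun measurableSet_Ioc
        (fun s hs => (if_neg (not_le.2 hs.1) : J t s = 0))]
      simp
    rw [h1, ← Set.Ioc_union_Ioc_eq_Ioc ht.1 ht.2,
      setIntegral_union (Set.Ioc_disjoint_Ioc_of_le le_rfl) measurableSet_Ioc
        (hJIO t 0 t) (hJIO t t T), h2, add_zero]
  have E2 : ∀ s ∈ Set.Ioc (0 : ℝ) T, (∫ t, J t s ∂ν) = ∫ t in s..T, H t s := by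
    intro s hs
    rw [hνdef, ← Set.Ioc_union_Ioc_eq_Ioc hs.1.le hs.2,
      setIntegral_union (Set.Ioc_disjoint_Ioc_of_le le_rfl) measurableSet_Ioc
        (hJIOt s 0 s) (hJIOt s s T)]
    have h0 : ∫ t in Set.Ioc (0 : ℝ) s, J t s = 0 := by
      rw [integral_Ioc_eq_integral_Ioo,
        setIntegral_congr_fun measurableSet_Ioo
          (fun t ht => (if_neg (not_le.2 ht.2) : J t s = 0))]
      simp
    have h1 : ∫ t in Set.Ioc s T, J t s = ∫ t in Set.Ioc s T, H t s :=
      setIntegral_congr_fun measurableSet_Ioc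
        (fun t ht => (if_pos ht.1.le : J t s = H t s))
    rw [h0, h1, zero_add, ← intervalIntegral.integral_of_le hs.2]
  have hJP : Integrable (Function.uncurry J) (ν.prod ν) := by
    refine Integrable.mono' (integrable_const (C * CP)) hJSM.aestronglyMeasurable ?_
    filter_upwards with q
    rw [Real.norm_eq_abs]
    exact hJb q.1 q.2
  have hswap : ∫ t, (∫ s, J t s ∂ν) ∂ν = ∫ s, (∫ t, J t s ∂ν) ∂ν :=
    MeasureTheory.integral_integral_swap hJP
  -- pointwise rewriting of the integrand
  have hEq : ∀ t ∈ Set.Icc (0 : ℝ) T,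
      ip L a (w t) (pgrad fun x => deriv (fun s => χ (s, x)) t + lap (fun x' => χ (t, x')) x)
        = (∫ s, J t s ∂ν) + gf t := by
    intro t ht
    set ψ : ℝ × ℝ → ℝ := fun x' => deriv (fun s => χ (s, x')) t with hψ
    have hψeq : ψ = fun x' => S16.D S16.et χ (t, x') := S16.tslice_eq hχ t
    have hψsmooth : ContDiff ℝ (⊤ : ℕ∞) ψ := by
      rw [hψeq]
      exact (S16.contDiff_D hχ S16.et).comp (contDiff_const.prodMk contDiff_id)
    have hψsupp : tsupport ψ ⊆ dom L a := by
      have hsub : Function.support ψ ⊆ {x' : ℝ × ℝ | (t, x') ∈ tsupport χ} := by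
        intro x' hx'
        have hne : S16.D S16.et χ (t, x') ≠ 0 := by
          rw [hψeq] at hx'
          exact hx'
        exact S16.support_D S16.et (subset_closure hne)
      have hcl2 : IsClosed {x' : ℝ × ℝ | (t, x') ∈ tsupport χ} :=
        (isClosed_tsupport χ).preimage (continuous_const.prodMk continuous_id)
      refine (closure_minimal hsub hcl2).trans ?_
      intro x' hx'
      exact (hsupp hx').2
    have hwk := hweak ψ hψsmooth hψsupp t ht
    have hL2 : ip L a (w t) (pgrad ψ) = ip L a (w t) (S16.Rv χ t) := by
      congr 1
      funext x
      exact S16.pgrad_tslice hχ t x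
    have hR : (∫ s in (0 : ℝ)..t, ip L a (w s) (pgrad (lap ψ)))
        = ∫ s in (0 : ℝ)..t, H t s := by
      apply intervalIntegral.integral_congr
      intro s hs
      rw [Set.uIcc_of_le ht.1] at hs
      have hs' : s ∈ Set.Icc (0 : ℝ) T := ⟨hs.1, hs.2.trans ht.2⟩
      have h1 : pgrad (lap ψ) = S16.Pv χ t := funext (S16.pgrad_lap_eq hχ t)
      simp only [h1, hH, hwc, hcleq s hs']
    obtain ⟨CR, hCR0, hCR⟩ := S16.Rv_bound hχ hK
    have hwtI : Integrable (w t) μ := (hw2 t ht).integrable one_le_two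
    have hRaesm : AEStronglyMeasurable (S16.Rv χ t) μ :=
      ((S16.continuous_Rv hχ).comp (continuous_const.prodMk continuous_id)).aestronglyMeasurable
    have intR : Integrable
        (fun x => (w t x).1 * (S16.Rv χ t x).1 + (w t x).2 * (S16.Rv χ t x).2) μ :=
      S16.integrand_integrable hwtI hRaesm (hCR t)
    have intQ : Integrable
        (fun x => (w t x).1 * (S16.Qv χ t x).1 + (w t x).2 * (S16.Qv χ t x).2) μ :=
      S16.integrand_integrable hwtI (hQvaesm t) (hCQ t)
    have hsplitIp : ip L a (w t)
        (pgrad fun x => deriv (fun s => χ (s, x)) t + lap (fun x' => χ (t, x')) x)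
          = ip L a (w t) (S16.Rv χ t) + ip L a (w t) (S16.Qv χ t) := by
      have hfeq : (pgrad fun x => deriv (fun s => χ (s, x)) t + lap (fun x' => χ (t, x')) x)
          = fun x => S16.Rv χ t x + S16.Qv χ t x := funext (S16.target_pgrad' hχ t)
      rw [hfeq, S16.ip_def, S16.ip_def, S16.ip_def, ← MeasureTheory.integral_add intR intQ]
      apply MeasureTheory.integral_congr_ae
      filter_upwards with x
      simp only [Prod.fst_add, Prod.snd_add]
      ring
    have hgft : gf t = ip L a (w t) (S16.Qv χ t) := by
      simp only [hgf, hwc, hcleq t ht]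
    rw [hsplitIp, hL2.symm.trans (hwk.trans hR), E1 t ht, hgft]
  -- integrability of the two pieces on [0,T]
  have hint1 : IntervalIntegrable (fun t => ∫ s, J t s ∂ν) volume 0 T := by
    rw [intervalIntegrable_iff]
    refine Integrable.mono'
      (integrableOn_const (C := (C * CP) * (ν Set.univ).toReal) (ne_of_lt ?_))
      ((hJSM.integral_prod_right' (ν := ν)).aestronglyMeasurable.restrict) ?_
    · rw [Set.uIoc_of_le hT.le]
      exact hIoc_fin 0 T
    · filter_upwards with t
      exact norm_integral_le_of_norm_le_const (by
        filter_upwards with s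
        rw [Real.norm_eq_abs]
        exact hJb t s)
  have hint2 : IntervalIntegrable gf volume 0 T := by
    rw [intervalIntegrable_iff]
    refine Integrable.mono' (integrableOn_const (C := C * CQ) (ne_of_lt ?_))
      (hgfSM.aestronglyMeasurable.restrict) ?_
    · rw [Set.uIoc_of_le hT.le]
      exact hIoc_fin 0 T
    · filter_upwards with s
      rw [Real.norm_eq_abs]
      exact hgfb s
  have hmain : ∫ t in (0 : ℝ)..T,
      ip L a (w t) (pgrad fun x => deriv (fun s => χ (s, x)) t + lap (fun x' => χ (t, x')) x)
        = (∫ t in (0 : ℝ)..T, (∫ s, J t s ∂ν)) + ∫ t in (0 : ℝ)..T, gf t := by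
    rw [← intervalIntegral.integral_add hint1 hint2]
    apply intervalIntegral.integral_congr
    intro t ht
    rw [Set.uIcc_of_le hT.le] at ht
    exact hEq t ht
  have hA : ∫ t in (0 : ℝ)..T, (∫ s, J t s ∂ν) = - ∫ s in (0 : ℝ)..T, gf s := by
    rw [intervalIntegral.integral_of_le hT.le, ← hνdef, hswap, hνdef]
    have hE3 : ∫ s in Set.Ioc (0 : ℝ) T, (∫ t, J t s ∂ν) = ∫ s in Set.Ioc (0 : ℝ) T, (- gf s) := by
      apply setIntegral_congr_fun measurableSet_Ioc
      intro s hs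
      have hs' : s ∈ Set.Icc (0 : ℝ) T := ⟨hs.1.le, hs.2⟩
      have hift : ∫ t in s..T, H t s = - gf s := by
        have := S16.inner_ftc hχ hsupp (hwcI s) hs'
        exact this
      show (∫ t, J t s ∂ν) = - gf s
      rw [E2 s hs, hift]
    rw [hE3, MeasureTheory.integral_neg, ← intervalIntegral.integral_of_le hT.le]
  rw [hmain, hA]
  exact neg_add_cancel _
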